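/- arXiv:0903.5472 — 2 statements merged into one kernel-verified Lean document; each statement's English description precedes it below -/
import Mathlib

section
/- Let G be a group with elements f, g, e satisfying e² = 1, (fe)² = 1, (ge)² = 1, and (fge)^p = 1 for an odd positive integer p. Then e = ((fgf⁻¹g⁻¹)^((p−1)/2) · fg)⁻¹; in particular e lies in the subgroup generated by f and g, so G is generated by f and g. -/
theorem e_in_closure_of_odd {G : Type*} [Group G] (f g e : G) (p : ℕ)
    (he : e ^ 2 = 1) (hfe : (f * e) ^ 2 = 1) (hge : (g * e) ^ 2 = 1)
    (hp : Odd p) (hpos : 0 < p) (hfge : (f * g * e) ^ p = 1) :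
    e = ((f * g * f⁻¹ * g⁻¹) ^ ((p - 1) / 2) * (f * g))⁻¹ ∧
      e ∈ Subgroup.closure {f, g} := by
  obtain ⟨k, hk⟩ := hp
  have hdiv : (p - 1) / 2 = k := by omega
  have hee : e * e = 1 := by simpa [sq] using he
  have hef : e * f * e = f⁻¹ := by
    refine eq_inv_of_mul_eq_one_right ?_
    calc f * (e * f * e) = (f * e) * (f * e) := by group
      _ = 1 := by simpa [sq] using hfe
  have heg : e * g * e = g⁻¹ := by
    refine eq_inv_of_mul_eq_one_right ?_
    calc g * (e * g * e) = (g * e) * (g * e) := by group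
      _ = 1 := by simpa [sq] using hge
  have he' : e⁻¹ = e := inv_eq_of_mul_eq_one_right hee
  have hsq : (f * g * e) ^ 2 = f * g * f⁻¹ * g⁻¹ := by
    calc (f * g * e) ^ 2 = f * g * ((e * f * e) * (e⁻¹ * g * e)) := by rw [sq]; group
      _ = f * g * f⁻¹ * g⁻¹ := by rw [he', hef, heg]; group
  have hmain : (f * g * f⁻¹ * g⁻¹) ^ k * (f * g * e) = 1 := by
    calc (f * g * f⁻¹ * g⁻¹) ^ k * (f * g * e)
        = ((f * g * e) ^ 2) ^ k * (f * g * e) := by rw [hsq]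
      _ = (f * g * e) ^ (2 * k + 1) := by rw [← pow_mul, ← pow_succ]
      _ = 1 := by rw [← hk]; exact hfge
  have heq : e = ((f * g * f⁻¹ * g⁻¹) ^ ((p - 1) / 2) * (f * g))⁻¹ := by
    rw [hdiv, mul_inv_rev]
    have h2 : f * g * e = ((f * g * f⁻¹ * g⁻¹) ^ k)⁻¹ :=
      eq_inv_of_mul_eq_one_right hmain
    calc e = (f * g)⁻¹ * (f * g * e) := by group
      _ = (f * g)⁻¹ * ((f * g * f⁻¹ * g⁻¹) ^ k)⁻¹ := by rw [h2]
  refine ⟨heq, ?_⟩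
  have hf : f ∈ Subgroup.closure {f, g} :=
    Subgroup.subset_closure (by simp)
  have hg : g ∈ Subgroup.closure {f, g} :=
    Subgroup.subset_closure (by simp)
  rw [heq]
  exact inv_mem (mul_mem (pow_mem (mul_mem (mul_mem (mul_mem hf hg) (inv_mem hf)) (inv_mem hg)) _) (mul_mem hf hg))
end

section
/- In the group G = ⟨f, v, u | f^n, v², (fv)^m, (fvuvu⁻¹)^k, [f,u]⟩ with m odd, the elements v and u lie in the subgroup generated by f and g := v·u·f^((n−1)/2); hence G is generated by f and g. -/
open scoped commutatorElement

/-- Relations of `GTet₂[n,m,k] = ⟨f, v, u | fⁿ, v², (fv)^m, (fvuvu⁻¹)^k, [f,u]⟩`,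
with generators `f = 0`, `v = 1`, `u = 2`. -/
def relsGTet2 (n m k : ℕ) : Set (FreeGroup (Fin 3)) :=
  {(FreeGroup.of 0) ^ n, (FreeGroup.of 1) ^ 2,
    (FreeGroup.of 0 * FreeGroup.of 1) ^ m,
    (FreeGroup.of 0 * FreeGroup.of 1 * FreeGroup.of 2 * FreeGroup.of 1 *
      (FreeGroup.of 2)⁻¹) ^ k,
    ⁅(FreeGroup.of 0 : FreeGroup (Fin 3)), FreeGroup.of 2⁆}

/-!
Conjugation by `g = v·u·f^s` acts on `f` as conjugation by `v`, because `u` commutes with `f`.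
Hence `f·g·f·g⁻¹ = (f·v)²`, and since `(f·v)^(2t+1) = 1` and `v` is an involution, `v = ((f·v)²)^t·f` lies in `⟨f, g⟩`; then so does `u = v⁻¹·g·f^(-s)`.
-/

section

variable {G : Type*} [Group G]

theorem eq_sq_pow_mul_of_sq_eq_one {f v : G} {t : ℕ} (hv : v ^ 2 = 1)
    (hfv : (f * v) ^ (2 * t + 1) = 1) : v = ((f * v) ^ 2) ^ t * f := by
  have hv_inv : v⁻¹ = v := inv_eq_of_mul_eq_one_right (by rwa [← pow_two])
  have hfv' : (f * v) ^ (2 * t) * (f * v) = 1 := by rwa [← pow_succ]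
  have hpow : (f * v) ^ (2 * t) = v * f⁻¹ := by
    rw [eq_inv_of_mul_eq_one_left hfv', mul_inv_rev, hv_inv]
  rw [← pow_mul, hpow, inv_mul_cancel_right]

theorem mul_conj_of_commute {f w : G} (v : G) (h : Commute w f) :
    v * w * f * (v * w)⁻¹ = v * f * v⁻¹ := by
  calc v * w * f * (v * w)⁻¹ = v * (w * f * w⁻¹) * v⁻¹ := by group
    _ = v * f * v⁻¹ := by rw [h.mul_inv_cancel]

theorem mem_closure_pair_mul_mul_pow {f v u : G} (s t : ℕ) (hv : v ^ 2 = 1)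
    (hfv : (f * v) ^ (2 * t + 1) = 1) (hfu : Commute f u) :
    v ∈ Subgroup.closure {f, v * u * f ^ s} ∧ u ∈ Subgroup.closure {f, v * u * f ^ s} := by
  set g := v * u * f ^ s
  set H := Subgroup.closure {f, g}
  have hf : f ∈ H := Subgroup.subset_closure (by simp)
  have hg : g ∈ H := Subgroup.subset_closure (by simp)
  have hv_inv : v⁻¹ = v := inv_eq_of_mul_eq_one_right (by rwa [← pow_two])
  have hcomm : f * g * f * g⁻¹ = (f * v) ^ 2 := by
    have hconj : g * f * g⁻¹ = v * f * v⁻¹ := by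
      simpa only [g, mul_assoc] using
        mul_conj_of_commute v (hfu.symm.mul_left ((Commute.refl f).pow_left s))
    calc f * g * f * g⁻¹ = f * (g * f * g⁻¹) := by group
      _ = (f * v) ^ 2 := by rw [hconj, hv_inv, pow_two]; group
  have hvH : v ∈ H := by
    rw [eq_sq_pow_mul_of_sq_eq_one hv hfv, ← hcomm]
    exact mul_mem (pow_mem (mul_mem (mul_mem (mul_mem hf hg) hf) (inv_mem hg)) t) hf
  have hu : u = v⁻¹ * g * (f ^ s)⁻¹ := by simp only [g]; group
  exact ⟨hvH, hu ▸ mul_mem (mul_mem (inv_mem hvH) hg) (inv_mem (pow_mem hf s))⟩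

end

/-- In `G = ⟨f, v, u | fⁿ, v², (fv)^m, (fvuvu⁻¹)^k, [f,u]⟩` with `m` odd,
both `v` and `u` lie in the subgroup generated by `f` and `g = v·u·f^((n−1)/2)`;
hence `G` is generated by `f` and `g`. -/
theorem gtet2_two_generated (n m k : ℕ) (hm : Odd m) :
    let f : PresentedGroup (relsGTet2 n m k) := PresentedGroup.of 0
    let v : PresentedGroup (relsGTet2 n m k) := PresentedGroup.of 1
    let u : PresentedGroup (relsGTet2 n m k) := PresentedGroup.of 2
    let g := v * u * f ^ ((n - 1) / 2)
    v ∈ Subgroup.closure {f, g} ∧ u ∈ Subgroup.closure {f, g} ∧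
      Subgroup.closure {f, g} = (⊤ : Subgroup (PresentedGroup (relsGTet2 n m k))) := by
  intro f v u g
  obtain ⟨t, rfl⟩ := hm
  have hv : v ^ 2 = 1 := PresentedGroup.one_of_mem (by simp [relsGTet2])
  have hfv : (f * v) ^ (2 * t + 1) = 1 := PresentedGroup.one_of_mem (by simp [relsGTet2])
  have hfu : Commute f u := by
    have h := PresentedGroup.one_of_mem (rels := relsGTet2 n (2 * t + 1) k)
      (x := ⁅(FreeGroup.of 0 : FreeGroup (Fin 3)), FreeGroup.of 2⁆) (by simp [relsGTet2])
    rwa [map_commutatorElement, commutatorElement_eq_one_iff_commute] at h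
  obtain ⟨hvH, huH⟩ := mem_closure_pair_mul_mul_pow ((n - 1) / 2) t hv hfv hfu
  refine ⟨hvH, huH, Subgroup.eq_top_iff' _ |>.mpr <| PresentedGroup.generated_by _ _ fun j => ?_⟩
  fin_cases j
  · exact Subgroup.subset_closure (Set.mem_insert f _)
  · exact hvH
  · exact huH
end
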